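/- Let X and Y be fixed real tensors of order N with mode dimensions d_1, ..., d_N, and let T be a TT-Rademacher distributed tensor of rank parameter R of the same shape. Then Cov(⟨T, X⟩, ⟨T, Y⟩) = ⟨X, Y⟩, and hence the covariance matrix of the random vector (⟨T, X⟩, ⟨T, Y⟩) is [[||X||_F^2, ⟨X,Y⟩], [⟨X,Y⟩, ||Y||_F^2]]. -/

import Mathlib

/-!
Write `ε_τ` for the independent Rademacher core entries. Their Walsh products
`ε_s = ∏_{τ ∈ s} ε_τ` are orthonormal: `E[ε_s ε_t] = ∏_τ E[ε_τ ^ ([τ ∈ s] + [τ ∈ t])]`, which is `1`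
if `s = t` and `0` otherwise. Expanding the matrix products,
`⟨T, X⟩ = (R^{N-1})^{-1/2} ∑_{i, p} X_i ε_{S(i,p)}` over multi-indices `i` and rank paths `p`,
where the set `S(i,p)` of core entries met along the path is nonempty and determines `(i, p)`.
Hence `⟨T, X⟩` is centred and `E[⟨T, X⟩⟨T, Y⟩] = R^{-(N-1)} · #paths · ⟨X, Y⟩ = ⟨X, Y⟩`,
as there are exactly `R^{N-1}` rank paths.
-/

open MeasureTheory ProbabilityTheory

noncomputable section

/-- The law of a Rademacher random variable: `±1` with probability `1/2` each. -/
def rademacherLaw : Measure ℝ :=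
  (2⁻¹ : ENNReal) • Measure.dirac 1 + (2⁻¹ : ENNReal) • Measure.dirac (-1)

/-- The sequence of TT-ranks of a TT decomposition with rank parameter `R`:
the boundary ranks are `1` and all the internal ranks are `R` (so that the core
`G⁽ⁿ⁾` has shape `ttRk n × dₙ × ttRk (n+1)`, i.e. `1 × d₁ × R`, `R × dₙ × R`, …,
`R × d_N × 1`). -/
def ttRk (N R : ℕ) (k : Fin (N + 1)) : ℕ :=
  if k = 0 ∨ k = Fin.last N then 1 else R

/-- The unnormalized `(i₁, …, i_N)` entry of a TT tensor with cores `G⁽ⁿ⁾`: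
the scalar matrix product `G⁽¹⁾[:,i₁,:] G⁽²⁾[:,i₂,:] ⋯ G⁽ᴺ⁾[:,i_N,:]`, written
as a sum over all rank paths. -/
def ttChain {Ω : Type*} [MeasurableSpace Ω] {N R : ℕ} {d : Fin N → ℕ}
    (G : (n : Fin N) → Fin (ttRk N R n.castSucc) → Fin (d n) → Fin (ttRk N R n.succ) → Ω → ℝ)
    (i : (n : Fin N) → Fin (d n)) (ω : Ω) : ℝ :=
  ∑ p : (k : Fin (N + 1)) → Fin (ttRk N R k),
    ∏ n : Fin N, G n (p n.castSucc) (i n) (p n.succ) ω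

/-- The `(i₁, …, i_N)` entry of the TT-Rademacher distributed tensor of rank parameter `R`
built from the cores `G⁽ⁿ⁾`:
`T[i₁,…,i_N] = (1/√(R^{N−1})) G⁽¹⁾[:,i₁,:] G⁽²⁾[:,i₂,:] ⋯ G⁽ᴺ⁾[:,i_N,:]`. -/
def ttEntry {Ω : Type*} [MeasurableSpace Ω] {N R : ℕ} {d : Fin N → ℕ}
    (G : (n : Fin N) → Fin (ttRk N R n.castSucc) → Fin (d n) → Fin (ttRk N R n.succ) → Ω → ℝ)
    (i : (n : Fin N) → Fin (d n)) (ω : Ω) : ℝ :=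
  (Real.sqrt (R ^ (N - 1)))⁻¹ * ttChain G i ω

/-- The inner product `⟨T, X⟩` of the TT-Rademacher tensor with a fixed tensor `X`. -/
def ttInner {Ω : Type*} [MeasurableSpace Ω] {N R : ℕ} {d : Fin N → ℕ}
    (G : (n : Fin N) → Fin (ttRk N R n.castSucc) → Fin (d n) → Fin (ttRk N R n.succ) → Ω → ℝ)
    (X : ((n : Fin N) → Fin (d n)) → ℝ) (ω : Ω) : ℝ :=
  ∑ i : (n : Fin N) → Fin (d n), ttEntry G i ω * X i

/-- The covariance of two real random variables. -/
def cov {Ω : Type*} [MeasurableSpace Ω] (μ : Measure Ω) (f g : Ω → ℝ) : ℝ :=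
  ∫ ω, (f ω - ∫ ω', f ω' ∂μ) * (g ω - ∫ ω', g ω' ∂μ) ∂μ

instance : IsProbabilityMeasure rademacherLaw :=
  ⟨by simp [rademacherLaw, ENNReal.inv_two_add_inv_two]⟩

lemma integral_rademacherLaw (g : ℝ → ℝ) :
    ∫ x, g x ∂rademacherLaw = (g 1 + g (-1)) / 2 := by
  have hint : ∀ a : ℝ, Integrable g (Measure.dirac a) := fun a =>
    (integrable_const (g a)).congr (ae_eq_dirac g).symm
  rw [rademacherLaw, integral_add_measure ((hint 1).smul_measure (by simp))
      ((hint (-1)).smul_measure (by simp)), integral_smul_measure, integral_smul_measure,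
    integral_dirac, integral_dirac]
  simp only [ENNReal.toReal_inv, ENNReal.toReal_ofNat, smul_eq_mul]
  ring

lemma ae_rademacherLaw : ∀ᵐ x ∂rademacherLaw, x = 1 ∨ x = -1 := by
  have hS : MeasurableSet {x : ℝ | x = 1 ∨ x = -1} :=
    (measurableSet_singleton 1).union (measurableSet_singleton (-1))
  simp only [rademacherLaw, ae_add_measure_iff]
  exact ⟨Measure.ae_smul_measure ((ae_dirac_iff hS).2 (Or.inl rfl)) _,
    Measure.ae_smul_measure ((ae_dirac_iff hS).2 (Or.inr rfl)) _⟩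

section Walsh

variable {Ω : Type*} [MeasurableSpace Ω] {μ : Measure Ω}

lemma aemeasurable_of_map_eq_rademacherLaw {f : Ω → ℝ} (hlaw : μ.map f = rademacherLaw) :
    AEMeasurable f μ :=
  AEMeasurable.of_map_ne_zero (hlaw ▸ IsProbabilityMeasure.ne_zero _)

lemma ae_eq_one_or_eq_neg_one_of_map_eq_rademacherLaw {f : Ω → ℝ}
    (hlaw : μ.map f = rademacherLaw) : ∀ᵐ ω ∂μ, f ω = 1 ∨ f ω = -1 :=
  ae_of_ae_map (aemeasurable_of_map_eq_rademacherLaw hlaw) (hlaw ▸ ae_rademacherLaw)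

variable {ι : Type*} {F : ι → Ω → ℝ}

lemma integrable_prod_mul_prod_of_rademacher [Countable ι] [IsFiniteMeasure μ]
    (hlaw : ∀ τ, μ.map (F τ) = rademacherLaw) (s t : Finset ι) :
    Integrable (fun ω => (∏ τ ∈ s, F τ ω) * ∏ τ ∈ t, F τ ω) μ := by
  have hF τ := aemeasurable_of_map_eq_rademacherLaw (hlaw τ)
  refine (integrable_const 1).mono' (by fun_prop) ?_
  filter_upwards [ae_all_iff.2 fun τ =>
    ae_eq_one_or_eq_neg_one_of_map_eq_rademacherLaw (hlaw τ)] with ω hω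
  have habs : ∀ u : Finset ι, |∏ τ ∈ u, F τ ω| = 1 := fun u => by
    rw [Finset.abs_prod]
    exact Finset.prod_eq_one fun τ _ => by rcases hω τ with h | h <;> simp [h]
  rw [Real.norm_eq_abs, abs_mul, habs, habs, mul_one]

lemma integral_prod_mul_prod_of_rademacher [Fintype ι] [DecidableEq ι]
    (hlaw : ∀ τ, μ.map (F τ) = rademacherLaw) (hindep : iIndepFun F μ) (s t : Finset ι) :
    ∫ ω, (∏ τ ∈ s, F τ ω) * ∏ τ ∈ t, F τ ω ∂μ = if s = t then 1 else 0 := by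
  have hF τ := aemeasurable_of_map_eq_rademacherLaw (hlaw τ)
  set g : ι → ℝ → ℝ := fun τ x => (if τ ∈ s then x else 1) * (if τ ∈ t then x else 1)
  have hprod ω : (∏ τ ∈ s, F τ ω) * ∏ τ ∈ t, F τ ω = ∏ τ, g τ (F τ ω) := by
    simp only [g, Finset.prod_mul_distrib, Finset.prod_ite_mem, Finset.univ_inter]
  have hg τ : Measurable (g τ) := by
    simp only [g]
    split_ifs <;> fun_prop
  -- `g τ x = x ^ ([τ ∈ s] + [τ ∈ t])`, whose Rademacher mean is `1` iff the exponent is even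
  have hfactor τ : ∫ ω, g τ (F τ ω) ∂μ = if (τ ∈ s ↔ τ ∈ t) then 1 else 0 := by
    rw [← integral_map (hF τ) (hg τ).aestronglyMeasurable, hlaw, integral_rademacherLaw]
    by_cases hs : τ ∈ s <;> by_cases ht : τ ∈ t <;> simp [g, hs, ht]
  simp_rw [hprod]
  rw [hindep.integral_fun_prod_comp hF fun τ => (hg τ).aestronglyMeasurable]
  simp_rw [hfactor]
  rw [Fintype.prod_boole]
  exact if_congr Finset.ext_iff.symm rfl rfl

variable [Fintype ι] [DecidableEq ι] {κ : Type*} [Fintype κ] {S : κ → Finset ι}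

lemma integral_sum_mul_prod_eq_zero_of_rademacher (hlaw : ∀ τ, μ.map (F τ) = rademacherLaw)
    (hindep : iIndepFun F μ) (hS : ∀ z, (S z).Nonempty) (a : κ → ℝ) :
    ∫ ω, ∑ z, a z * ∏ τ ∈ S z, F τ ω ∂μ = 0 := by
  have := hindep.isProbabilityMeasure
  have hW z : ∫ ω, ∏ τ ∈ S z, F τ ω ∂μ = 0 := by
    simpa [(hS z).ne_empty] using integral_prod_mul_prod_of_rademacher hlaw hindep (S z) ∅
  rw [integral_finsetSum _ fun z _ => by
    simpa using (integrable_prod_mul_prod_of_rademacher hlaw (S z) ∅).const_mul (a z)]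
  simp [integral_const_mul, hW]

lemma integral_sum_mul_sum_of_rademacher (hlaw : ∀ τ, μ.map (F τ) = rademacherLaw)
    (hindep : iIndepFun F μ) (hS : S.Injective) (a b : κ → ℝ) :
    ∫ ω, (∑ z, a z * ∏ τ ∈ S z, F τ ω) * ∑ w, b w * ∏ τ ∈ S w, F τ ω ∂μ = ∑ z, a z * b z := by
  have := hindep.isProbabilityMeasure
  calc ∫ ω, (∑ z, a z * ∏ τ ∈ S z, F τ ω) * ∑ w, b w * ∏ τ ∈ S w, F τ ω ∂μ
      = ∫ ω, ∑ z, ∑ w, a z * b w * ((∏ τ ∈ S z, F τ ω) * ∏ τ ∈ S w, F τ ω) ∂μ := by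
        congr 1 with ω
        rw [Finset.sum_mul_sum]
        exact Finset.sum_congr rfl fun z _ => Finset.sum_congr rfl fun w _ => by ring
    _ = ∑ z, ∑ w, a z * b w * if S z = S w then 1 else 0 := by
        have hint z w := (integrable_prod_mul_prod_of_rademacher hlaw (S z) (S w)).const_mul
          (a z * b w)
        rw [integral_finsetSum _ fun z _ => integrable_finsetSum _ fun w _ => hint z w]
        simp_rw [integral_finsetSum _ fun w _ => hint _ w, integral_const_mul,
          integral_prod_mul_prod_of_rademacher hlaw hindep]
    _ = ∑ z, a z * b z := by
        refine Finset.sum_congr rfl fun z _ => ?_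
        rw [Finset.sum_eq_single z (fun w _ hwz => by simp [hS.ne hwz.symm]) (by simp)]
        simp

end Walsh

section TensorTrain

variable {N R : ℕ} {d : Fin N → ℕ}

abbrev TTCoreIndex (N R : ℕ) (d : Fin N → ℕ) :=
  Σ n : Fin N, Fin (ttRk N R n.castSucc) × Fin (d n) × Fin (ttRk N R n.succ)

abbrev TTRankPath (N R : ℕ) := (k : Fin (N + 1)) → Fin (ttRk N R k)

def ttCoreEntries (i : (n : Fin N) → Fin (d n)) (p : TTRankPath N R) :
    Finset (TTCoreIndex N R d) :=
  Finset.univ.image fun n => ⟨n, (p n.castSucc, i n, p n.succ)⟩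

lemma prod_ttCoreEntries {M : Type*} [CommMonoid M] (f : TTCoreIndex N R d → M)
    (i : (n : Fin N) → Fin (d n)) (p : TTRankPath N R) :
    ∏ τ ∈ ttCoreEntries i p, f τ = ∏ n, f ⟨n, (p n.castSucc, i n, p n.succ)⟩ :=
  Finset.prod_image fun _ _ _ _ h => congrArg Sigma.fst h

lemma ttCoreEntries_nonempty (hN : 0 < N) (i : (n : Fin N) → Fin (d n)) (p : TTRankPath N R) :
    (ttCoreEntries i p).Nonempty :=
  Finset.image_nonempty.2 ⟨⟨0, hN⟩, Finset.mem_univ _⟩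

lemma ttCoreEntries_injective :
    Function.Injective fun z : ((n : Fin N) → Fin (d n)) × TTRankPath N R =>
      ttCoreEntries z.1 z.2 := by
  rintro ⟨i, p⟩ ⟨j, q⟩ (h : ttCoreEntries i p = ttCoreEntries j q)
  have key n : (p n.castSucc, i n, p n.succ) = (q n.castSucc, j n, q n.succ) := by
    have hn : ⟨n, (p n.castSucc, i n, p n.succ)⟩ ∈ ttCoreEntries j q :=
      h ▸ Finset.mem_image_of_mem _ (Finset.mem_univ n)
    obtain ⟨m, -, hm⟩ := Finset.mem_image.1 hn
    obtain ⟨rfl, hm⟩ := Sigma.mk.inj_iff.1 hm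
    exact (eq_of_heq hm).symm
  simp only [Prod.mk.injEq] at key
  refine Prod.ext (funext fun n => (key n).2.1) (funext fun k => ?_)
  rcases Fin.eq_zero_or_eq_succ k with rfl | ⟨n, rfl⟩
  · have : Subsingleton (Fin (ttRk N R 0)) := by
      rw [ttRk, if_pos (Or.inl rfl)]
      infer_instance
    exact Subsingleton.elim _ _
  · exact (key n).2.2

lemma card_ttRankPath (hN : 0 < N) : Fintype.card (TTRankPath N R) = R ^ (N - 1) := by
  obtain ⟨M, rfl⟩ := Nat.exists_eq_succ_of_ne_zero hN.ne'
  rw [Fintype.card_pi, Fin.prod_univ_succ, Fin.prod_univ_castSucc]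
  simp [ttRk, Fin.succ_ne_zero]

variable {Ω : Type*} [MeasurableSpace Ω]
  {G : (n : Fin N) → Fin (ttRk N R n.castSucc) → Fin (d n) → Fin (ttRk N R n.succ) → Ω → ℝ}

def ttCore
    (G : (n : Fin N) → Fin (ttRk N R n.castSucc) → Fin (d n) → Fin (ttRk N R n.succ) → Ω → ℝ)
    (τ : TTCoreIndex N R d) : Ω → ℝ :=
  G τ.1 τ.2.1 τ.2.2.1 τ.2.2.2

lemma ttInner_eq_sum (Z : ((n : Fin N) → Fin (d n)) → ℝ) :
    ttInner G Z = fun ω => ∑ z : ((n : Fin N) → Fin (d n)) × TTRankPath N R,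
      (Real.sqrt (R ^ (N - 1)))⁻¹ * Z z.1 * ∏ τ ∈ ttCoreEntries z.1 z.2, ttCore G τ ω := by
  ext ω
  simp only [ttInner, ttEntry, ttChain, Fintype.sum_prod_type, prod_ttCoreEntries, ttCore,
    Finset.mul_sum, Finset.sum_mul]
  exact Finset.sum_congr rfl fun i _ => Finset.sum_congr rfl fun p _ => by ring

lemma cov_ttInner {μ : Measure Ω} (hN : 0 < N) (hR : 0 < R)
    (hlaw : ∀ n a i b, μ.map (G n a i b) = rademacherLaw) (hindep : iIndepFun (ttCore G) μ)
    (X Y : ((n : Fin N) → Fin (d n)) → ℝ) :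
    cov μ (ttInner G X) (ttInner G Y) = ∑ i, X i * Y i := by
  have hlaw' τ : μ.map (ttCore G τ) = rademacherLaw := hlaw _ _ _ _
  have hmean Z : ∫ ω, ttInner G Z ω ∂μ = 0 := by
    rw [ttInner_eq_sum]
    exact integral_sum_mul_prod_eq_zero_of_rademacher hlaw' hindep
      (fun _ => ttCoreEntries_nonempty hN _ _) _
  rw [cov, hmean, hmean]
  simp only [sub_zero]
  rw [ttInner_eq_sum, ttInner_eq_sum,
    integral_sum_mul_sum_of_rademacher hlaw' hindep ttCoreEntries_injective,
    Fintype.sum_prod_type]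
  set c := (Real.sqrt (R ^ (N - 1)))⁻¹
  have hc : (Fintype.card (TTRankPath N R) : ℝ) * (c * c) = 1 := by
    rw [card_ttRankPath hN, ← mul_inv, Real.mul_self_sqrt (by positivity)]
    push_cast
    exact mul_inv_cancel₀ (by positivity)
  refine Finset.sum_congr rfl fun i _ => ?_
  simp only [Finset.sum_const, Finset.card_univ, nsmul_eq_mul]
  linear_combination X i * Y i * hc

end TensorTrain

theorem tt_inner_covariance_general
    {Ω : Type*} [MeasurableSpace Ω] (μ : Measure Ω)
    (N R : ℕ) (hN : 0 < N) (hR : 0 < R) (d : Fin N → ℕ)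
    (G : (n : Fin N) → Fin (ttRk N R n.castSucc) → Fin (d n) → Fin (ttRk N R n.succ) → Ω → ℝ)
    (hlaw : ∀ n a i b, μ.map (G n a i b) = rademacherLaw)
    (hindep : iIndepFun
      (fun p : Σ n : Fin N, Fin (ttRk N R n.castSucc) × Fin (d n) × Fin (ttRk N R n.succ) =>
        G p.1 p.2.1 p.2.2.1 p.2.2.2) μ)
    (X Y : ((n : Fin N) → Fin (d n)) → ℝ) :
    cov μ (ttInner G X) (ttInner G Y) = ∑ i : (n : Fin N) → Fin (d n), X i * Y i ∧
    Matrix.of (fun a b : Fin 2 =>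
        cov μ (ttInner G (if a = 0 then X else Y)) (ttInner G (if b = 0 then X else Y))) =
      Matrix.of ![![∑ i : (n : Fin N) → Fin (d n), X i ^ 2,
                    ∑ i : (n : Fin N) → Fin (d n), X i * Y i],
                  ![∑ i : (n : Fin N) → Fin (d n), X i * Y i,
                    ∑ i : (n : Fin N) → Fin (d n), Y i ^ 2]] := by
  have hcov A B := cov_ttInner hN hR hlaw hindep A B
  refine ⟨hcov X Y, ?_⟩
  ext a b
  fin_cases a <;> fin_cases b <;> simp [hcov, sq, mul_comm]

/-- For fixed tensors `X, Y` and a TT-Rademacher distributed tensor `T`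
of rank parameter `R` of the same shape, `Cov(⟨T, X⟩, ⟨T, Y⟩) = ⟨X, Y⟩`; hence the
covariance matrix of `(⟨T, X⟩, ⟨T, Y⟩)` is `[[‖X‖_F², ⟨X,Y⟩], [⟨X,Y⟩, ‖Y‖_F²]]`. -/
theorem tt_inner_covariance
    {Ω : Type*} [MeasurableSpace Ω] (μ : Measure Ω) [IsProbabilityMeasure μ]
    (N R : ℕ) (hN : 0 < N) (hR : 0 < R) (d : Fin N → ℕ)
    (G : (n : Fin N) → Fin (ttRk N R n.castSucc) → Fin (d n) → Fin (ttRk N R n.succ) → Ω → ℝ)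
    (hmeas : ∀ n a i b, Measurable (G n a i b))
    (hlaw : ∀ n a i b, μ.map (G n a i b) = rademacherLaw)
    (hindep : iIndepFun
      (fun p : Σ n : Fin N, Fin (ttRk N R n.castSucc) × Fin (d n) × Fin (ttRk N R n.succ) =>
        G p.1 p.2.1 p.2.2.1 p.2.2.2) μ)
    (X Y : ((n : Fin N) → Fin (d n)) → ℝ) :
    cov μ (ttInner G X) (ttInner G Y) = ∑ i : (n : Fin N) → Fin (d n), X i * Y i ∧
    Matrix.of (fun a b : Fin 2 =>
        cov μ (ttInner G (if a = 0 then X else Y)) (ttInner G (if b = 0 then X else Y))) =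
      Matrix.of ![![∑ i : (n : Fin N) → Fin (d n), X i ^ 2,
                    ∑ i : (n : Fin N) → Fin (d n), X i * Y i],
                  ![∑ i : (n : Fin N) → Fin (d n), X i * Y i,
                    ∑ i : (n : Fin N) → Fin (d n), Y i ^ 2]] :=
  tt_inner_covariance_general μ N R hN hR d G hlaw hindep X Y
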